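/- arXiv:1404.5165 — 4 statements merged into one kernel-verified Lean document; each statement's English description precedes it below -/
import Mathlib

section
/- With Σ_SS, Λ positive definite, Σ_SD a real |S|×|D| matrix, Γ_xD = Σ_xS Σ_SS^{-1} Σ_SD for a row vector Σ_xS, Γ_DD = Σ_DS Σ_SS^{-1} Σ_SD, and Σ_a = Σ_SS + Σ_SD Λ^{-1} Σ_DS, it holds that Γ_xD (Γ_DD + Λ)^{-1} = Σ_xS Σ_a^{-1} Σ_SD Λ^{-1}. -/
open Matrix

/-- Equation (12) in the proof of Theorem 1 of GP-Localize:
`Γ_xD (Γ_DD + Λ)⁻¹ = Σ_xS Σ_a⁻¹ Σ_SD Λ⁻¹` where `Γ_xD = Σ_xS Σ_SS⁻¹ Σ_SD`,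
`Γ_DD = Σ_DS Σ_SS⁻¹ Σ_SD`, and `Σ_a = Σ_SS + Σ_SD Λ⁻¹ Σ_DS`. -/
theorem gamma_inverse_identity
    {S D : Type*} [Fintype S] [DecidableEq S] [Fintype D] [DecidableEq D]
    (SigSS : Matrix S S ℝ) (hSS : SigSS.PosDef)
    (Lam : Matrix D D ℝ) (hLam : Lam.PosDef)
    (SigSD : Matrix S D ℝ) (SigxS : Matrix (Fin 1) S ℝ) :
    (SigxS * SigSS⁻¹ * SigSD) * (SigSDᵀ * SigSS⁻¹ * SigSD + Lam)⁻¹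
      = SigxS * (SigSS + SigSD * Lam⁻¹ * SigSDᵀ)⁻¹ * SigSD * Lam⁻¹ := by
  set A := SigSDᵀ * SigSS⁻¹ * SigSD + Lam with hAdef
  set Sa := SigSS + SigSD * Lam⁻¹ * SigSDᵀ with hSadef
  have hT : (SigSDᵀ : Matrix D S ℝ) = SigSDᴴ :=
    (conjTranspose_eq_transpose_of_trivial SigSD).symm
  have h1 : (SigSDᵀ * SigSS⁻¹ * SigSD).PosSemidef := by
    rw [hT]; exact hSS.inv.posSemidef.conjTranspose_mul_mul_same SigSD
  have h2 : (SigSD * Lam⁻¹ * SigSDᵀ).PosSemidef := by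
    rw [hT]; exact hLam.inv.posSemidef.mul_mul_conjTranspose_same SigSD
  have hA : A.PosDef := Matrix.PosDef.posSemidef_add h1 hLam
  have hSa : Sa.PosDef := hSS.add_posSemidef h2
  have hAu : IsUnit A.det := hA.det_pos.ne'.isUnit
  have hSau : IsUnit Sa.det := hSa.det_pos.ne'.isUnit
  have hSSu : IsUnit SigSS.det := hSS.det_pos.ne'.isUnit
  have hLu : IsUnit Lam.det := hLam.det_pos.ne'.isUnit
  have key : Sa * (SigSS⁻¹ * SigSD) = SigSD * Lam⁻¹ * A := by
    rw [hSadef, hAdef, Matrix.add_mul, Matrix.mul_add,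
      Matrix.mul_nonsing_inv_cancel_left _ _ hSSu,
      Matrix.nonsing_inv_mul_cancel_right _ _ hLu]
    simp only [Matrix.mul_assoc]
    exact add_comm _ _
  have key2 : SigSS⁻¹ * SigSD = Sa⁻¹ * (SigSD * Lam⁻¹ * A) := by
    rw [← key, Matrix.nonsing_inv_mul_cancel_left _ _ hSau]
  have key3 : (SigSS⁻¹ * SigSD) * A⁻¹ = Sa⁻¹ * SigSD * Lam⁻¹ := by
    rw [key2, Matrix.mul_assoc Sa⁻¹, Matrix.mul_nonsing_inv_cancel_right _ _ hAu, ← Matrix.mul_assoc]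
  simp only [Matrix.mul_assoc] at key3 ⊢
  rw [key3]
end

section
/- Let Σ_SS, Λ be positive definite real matrices, Σ_SD an |S|×|D| matrix, Σ_DS its transpose, Γ_xD = Σ_xS Σ_SS^{-1} Σ_SD, Γ_DD = Σ_DS Σ_SS^{-1} Σ_SD, Γ_Dx = (Γ_xD)^T, and Σ_a = Σ_SS + Σ_SD Λ^{-1} Σ_DS. Then σ_xx − Γ_xD (Γ_DD + Λ)^{-1} Γ_Dx = σ_xx − Σ_xS (Σ_SS^{-1} − Σ_a^{-1}) Σ_Sx, where σ_xx is a real scalar and Σ_Sx = (Σ_xS)^T. -/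
open Matrix

/-- Variance part of Theorem 1 of GP-Localize: the PITC posterior variance
`σ_xx − Γ_xD (Γ_DD + Λ)⁻¹ Γ_Dx` equals the online assimilated-summary posterior
variance `σ_xx − Σ_xS (Σ_SS⁻¹ − Σ_a⁻¹) Σ_Sx` with `Σ_a = Σ_SS + Σ_SD Λ⁻¹ Σ_DS`. -/
theorem pitc_variance_equivalence
    {S D : Type*} [Fintype S] [DecidableEq S] [Fintype D] [DecidableEq D]
    (SigSS : Matrix S S ℝ) (hSS : SigSS.PosDef)
    (Lam : Matrix D D ℝ) (hLam : Lam.PosDef)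
    (SigSD : Matrix S D ℝ) (SigxS : Matrix (Fin 1) S ℝ) (sigxx : ℝ) :
    sigxx - ((SigxS * SigSS⁻¹ * SigSD) * (SigSDᵀ * SigSS⁻¹ * SigSD + Lam)⁻¹ *
        (SigxS * SigSS⁻¹ * SigSD)ᵀ) 0 0
      = sigxx - (SigxS * (SigSS⁻¹ - (SigSS + SigSD * Lam⁻¹ * SigSDᵀ)⁻¹) * SigxSᵀ) 0 0 := by
  have hSSinv : SigSS⁻¹.PosDef := hSS.inv
  have hΓ : (SigSDᵀ * SigSS⁻¹ * SigSD).PosSemidef := by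
    have := hSSinv.posSemidef.conjTranspose_mul_mul_same SigSD
    simpa using this
  have hsum : (Lam⁻¹⁻¹ + SigSDᵀ * SigSS⁻¹ * SigSD).PosDef := by
    rw [Matrix.nonsing_inv_nonsing_inv _ (isUnit_iff_isUnit_det _ |>.1 hLam.isUnit)]
    exact hLam.add_posSemidef hΓ
  have hwood : (SigSS + SigSD * Lam⁻¹ * SigSDᵀ)⁻¹
      = SigSS⁻¹ - SigSS⁻¹ * SigSD * (Lam⁻¹⁻¹ + SigSDᵀ * SigSS⁻¹ * SigSD)⁻¹ * SigSDᵀ * SigSS⁻¹ :=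
    Matrix.add_mul_mul_inv_eq_sub _ _ _ _ hSS.isUnit hLam.inv.isUnit hsum.isUnit
  have hLL : Lam⁻¹⁻¹ = Lam :=
    Matrix.nonsing_inv_nonsing_inv _ (isUnit_iff_isUnit_det _ |>.1 hLam.isUnit)
  have hSSt : SigSS⁻¹ᵀ = SigSS⁻¹ := by
    simpa using hSSinv.isHermitian.eq
  have hmat : (SigxS * SigSS⁻¹ * SigSD) * (SigSDᵀ * SigSS⁻¹ * SigSD + Lam)⁻¹ *
        (SigxS * SigSS⁻¹ * SigSD)ᵀ
      = SigxS * (SigSS⁻¹ - (SigSS + SigSD * Lam⁻¹ * SigSDᵀ)⁻¹) * SigxSᵀ := by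
    rw [hwood, hLL, add_comm (SigSDᵀ * SigSS⁻¹ * SigSD) Lam, sub_sub_cancel]
    simp only [Matrix.transpose_mul, hSSt]
    simp only [Matrix.mul_assoc]
  rw [hmat]
end

section
/- Let Σ_SS, Λ be positive definite real matrices, Σ_SD an |S|×|D| matrix with transpose Σ_DS, Γ_xD = Σ_xS Σ_SS^{-1} Σ_SD, Γ_DD = Σ_DS Σ_SS^{-1} Σ_SD, Σ_a = Σ_SS + Σ_SD Λ^{-1} Σ_DS, and μ_a = Σ_SD Λ^{-1} v for a real vector v of dimension |D|. Then μ_x + Γ_xD (Γ_DD + Λ)^{-1} v = μ_x + Σ_xS Σ_a^{-1} μ_a, where μ_x is a real scalar. -/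
open Matrix

/-- Mean part of Theorem 1 of GP-Localize: the PITC posterior mean
`μ_x + Γ_xD (Γ_DD + Λ)⁻¹ v` equals the online assimilated-summary posterior mean
`μ_x + Σ_xS Σ_a⁻¹ μ_a` with `Σ_a = Σ_SS + Σ_SD Λ⁻¹ Σ_DS` and `μ_a = Σ_SD Λ⁻¹ v`. -/
theorem pitc_mean_equivalence
    {S D : Type*} [Fintype S] [DecidableEq S] [Fintype D] [DecidableEq D]
    (SigSS : Matrix S S ℝ) (hSS : SigSS.PosDef)
    (Lam : Matrix D D ℝ) (hLam : Lam.PosDef)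
    (SigSD : Matrix S D ℝ) (SigxS : Matrix (Fin 1) S ℝ)
    (v : Matrix D (Fin 1) ℝ) (mux : ℝ) :
    mux + ((SigxS * SigSS⁻¹ * SigSD) * (SigSDᵀ * SigSS⁻¹ * SigSD + Lam)⁻¹ * v) 0 0
      = mux + (SigxS * (SigSS + SigSD * Lam⁻¹ * SigSDᵀ)⁻¹ * (SigSD * Lam⁻¹ * v)) 0 0 := by
  set A := SigSS
  set L := Lam
  set B := SigSD
  have hBt : Bᴴ = Bᵀ := by ext i j; simp [conjTranspose_apply]
  have hGamma : (Bᵀ * A⁻¹ * B).PosSemidef := by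
    have := hSS.inv.posSemidef.conjTranspose_mul_mul_same B
    rwa [hBt] at this
  have hG : (Bᵀ * A⁻¹ * B + L).PosDef := Matrix.PosDef.posSemidef_add hGamma hLam
  have hSa : (A + B * L⁻¹ * Bᵀ).PosDef := by
    have : (B * L⁻¹ * Bᵀ).PosSemidef := by
      have := hLam.inv.posSemidef.mul_mul_conjTranspose_same B
      rwa [hBt] at this
    exact hSS.add_posSemidef this
  set G := Bᵀ * A⁻¹ * B + L with hGdef
  set Sa := A + B * L⁻¹ * Bᵀ with hSadef
  have hAu : IsUnit A.det := hSS.det_pos.ne'.isUnit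
  have hLu : IsUnit L.det := hLam.det_pos.ne'.isUnit
  have hGu : IsUnit G.det := hG.det_pos.ne'.isUnit
  have hSau : IsUnit Sa.det := hSa.det_pos.ne'.isUnit
  -- key identity
  have h1 : Sa * (A⁻¹ * B) = B * L⁻¹ * G := by
    rw [hSadef, hGdef]
    rw [Matrix.add_mul, Matrix.mul_add]
    rw [← Matrix.mul_assoc A A⁻¹ B, mul_nonsing_inv _ hAu, Matrix.one_mul,
      Matrix.mul_assoc B L⁻¹ L, nonsing_inv_mul _ hLu, Matrix.mul_one]
    rw [add_comm]
    simp only [Matrix.mul_assoc]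
  have key : A⁻¹ * B * G⁻¹ = Sa⁻¹ * (B * L⁻¹) := by
    have h2 : Sa * (A⁻¹ * B * G⁻¹) = B * L⁻¹ := by
      rw [← Matrix.mul_assoc, h1, Matrix.mul_assoc, mul_nonsing_inv _ hGu, Matrix.mul_one]
    calc A⁻¹ * B * G⁻¹ = Sa⁻¹ * (Sa * (A⁻¹ * B * G⁻¹)) := by
          rw [← Matrix.mul_assoc, nonsing_inv_mul _ hSau, Matrix.one_mul]
      _ = Sa⁻¹ * (B * L⁻¹) := by rw [h2]
  have h3 : SigxS * A⁻¹ * B * G⁻¹ * v = SigxS * Sa⁻¹ * (B * L⁻¹ * v) := by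
    have := congrArg (fun M : Matrix S D ℝ => SigxS * (M * v)) key
    simp only [Matrix.mul_assoc] at this ⊢
    exact this
  rw [h3, ← Matrix.mul_assoc]
end

section
/- The assimilated-summary posterior variance is non-increasing in the number of assimilated slices: with Σ_a^0 = Σ_SS positive definite and Σ_a^N = Σ_a^{N-1} + Σ_SD_N Σ_{D_N D_N|S}^{-1} Σ_D_NS where Σ_{D_N D_N|S} is positive definite, the quantity σ̃_xx^N = σ_xx − Σ_xS (Σ_SS^{-1} − (Σ_a^N)^{-1}) Σ_Sx satisfies σ̃_xx^{N} ≤ σ̃_xx^{N-1} for all N ≥ 1. -/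
open Matrix

/-! Each slice adds the positive semidefinite term `Σ_SD Σ_{DD|S}⁻¹ Σ_DS`, so
`Σ_a^{N-1} ≤ Σ_a^N` in the Loewner order and all `Σ_a^N` are positive definite.
Inversion is antitone on positive definite matrices, hence the variance decreases by
`Σ_xS ((Σ_a^{N-1})⁻¹ - (Σ_a^N)⁻¹) Σ_Sx ≥ 0`. -/

namespace Matrix

theorem PosDef.posSemidef_inv_sub_inv {n K : Type*} [Fintype n] [DecidableEq n]
    [Field K] [PartialOrder K] [StarRing K] [StarOrderedRing K]
    {A B : Matrix n n K} (hA : A.PosDef) (hAB : (B - A).PosSemidef) :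
    (A⁻¹ - B⁻¹).PosSemidef := by
  have hB : B.PosDef := by simpa using hA.add_posSemidef hAB
  let := hB.isUnit.invertible
  let := hA.isUnit.invertible
  let := hA.inv.isUnit.invertible
  -- Both conditions are Schur complements of the same block matrix `[B, 1; 1, A⁻¹]`.
  have hblock : (fromBlocks B 1 1 A⁻¹).PosSemidef := by
    simpa using (PosDef.fromBlocks₂₂ B (1 : Matrix n n K) hA.inv).mpr (by simpa using hAB)
  simpa using (PosDef.fromBlocks₁₁ (1 : Matrix n n K) A⁻¹ hB).mp (by simpa using hblock)

theorem posDef_of_posSemidef_succ_sub {n R : Type*} [Fintype n]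
    [Ring R] [PartialOrder R] [StarRing R] [AddLeftMono R]
    {a : ℕ → Matrix n n R} (h0 : (a 0).PosDef)
    (hsucc : ∀ k, (a (k + 1) - a k).PosSemidef) (k : ℕ) : (a k).PosDef := by
  induction k with
  | zero => exact h0
  | succ k ih => simpa using ih.add_posSemidef (hsucc k)

end Matrix

/-- The assimilated-summary posterior variance is non-increasing in the number of
assimilated slices (GP-Localize, Definitions 1 and 2): with `Σ_a^0 = Σ_SS`
positive definite, `Σ_a^N = Σ_a^{N-1} + Σ_SD_N Σ_{D_ND_N|S}⁻¹ Σ_D_NS` where each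
`Σ_{D_ND_N|S}` is positive definite, the posterior variance
`σ̃_xx^N = σ_xx − Σ_xS (Σ_SS⁻¹ − (Σ_a^N)⁻¹) Σ_Sx` satisfies
`σ̃_xx^N ≤ σ̃_xx^{N-1}` for all `N ≥ 1`. -/
theorem assimilated_variance_nonincreasing
    {S : Type*} [Fintype S] [DecidableEq S]
    {D : ℕ → Type*} [∀ n, Fintype (D n)] [∀ n, DecidableEq (D n)]
    (SigSS : Matrix S S ℝ) (hSS : SigSS.PosDef)
    (SigSD : ∀ n, Matrix S (D n) ℝ)
    (SigDDcondS : ∀ n, Matrix (D n) (D n) ℝ) (hcond : ∀ n, (SigDDcondS n).PosDef)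
    (Siga : ℕ → Matrix S S ℝ) (h0 : Siga 0 = SigSS)
    (hrec : ∀ n : ℕ, Siga (n + 1)
      = Siga n + SigSD (n + 1) * (SigDDcondS (n + 1))⁻¹ * (SigSD (n + 1))ᵀ)
    (SigxS : Matrix (Fin 1) S ℝ) (sigxx : ℝ) :
    ∀ N : ℕ, 1 ≤ N →
      sigxx - (SigxS * (SigSS⁻¹ - (Siga N)⁻¹) * SigxSᵀ) 0 0
        ≤ sigxx - (SigxS * (SigSS⁻¹ - (Siga (N - 1))⁻¹) * SigxSᵀ) 0 0 := by
  have hstep : ∀ k, (Siga (k + 1) - Siga k).PosSemidef := fun k => by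
    simpa [hrec k, conjTranspose_eq_transpose_of_trivial] using
      (hcond (k + 1)).inv.posSemidef.mul_mul_conjTranspose_same (SigSD (k + 1))
  have hpos : ∀ k, (Siga k).PosDef := posDef_of_posSemidef_succ_sub (h0 ▸ hSS) hstep
  rintro N hN
  obtain ⟨k, rfl⟩ : ∃ k, N = k + 1 := ⟨N - 1, by omega⟩
  have hgap : 0 ≤ (SigxS * ((Siga k)⁻¹ - (Siga (k + 1))⁻¹) * SigxSᵀ) 0 0 := by
    simpa [conjTranspose_eq_transpose_of_trivial] using
      ((hpos k).posSemidef_inv_sub_inv (hstep k)).mul_mul_conjTranspose_same SigxS |>.diag_nonneg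
  simp only [Nat.add_sub_cancel, Matrix.mul_sub, Matrix.sub_mul, Matrix.sub_apply] at hgap ⊢
  linarith
end
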